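/- Let δ > 0, let X be a finite set, and let P and Q be probability distributions on X with Q(x) > 0 for all x ∈ X. Suppose the relative entropy satisfies S(P‖Q) ≤ c. Then there exists a subset Good ⊆ X such that ∑_{x∈Good} P(x) ≥ 1 − δ, and for every x ∈ Good, P(x)/Q(x) ≤ 2^{(c+1)/δ} (equivalently P(x) ≤ 2^{(c+1)/δ}·Q(x)). -/

import Mathlib

/-!
Let `B` be the set where `P x > 2 ^ L * Q x`, with `L = (c + 1) / δ`. Every term of the relative
entropy on `B` is at least `L * P x`, and since `t log₂ t ≥ -log₂ e / e > -1`, every term is more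
than `-Q x`. So the relative entropy exceeds `-1` (whence `L > 0`) and the terms off `B` sum to at
least `-1`. Hence `L * P(B) ≤ c + 1 = L * δ`, and the complement of `B` carries mass `≥ 1 - δ`.
-/

open Real Finset

lemma neg_exp_neg_one_le_mul_log {t : ℝ} (ht : 0 ≤ t) : -exp (-1) ≤ t * log t := by
  rcases ht.eq_or_lt with rfl | ht
  · simp [(exp_pos _).le]
  · have := mul_exp_neg_le_exp_neg_one (-log t)
    rw [neg_neg, exp_log ht] at this
    linarith

lemma exp_neg_one_lt_log_two : exp (-1) < log 2 :=
  exp_neg_one_lt_half.trans (by linarith [log_two_gt_d9])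

/- The cruder bound `p - q ≤ p * log (p / q)` would only give `-q / log 2`, which sums to less
than `-1`; the minimum `-exp (-1)` of `t * log t` is what keeps the constant below `1`. -/
lemma neg_lt_mul_logb_two_div {p q : ℝ} (hp : 0 ≤ p) (hq : 0 < q) :
    -q < p * logb 2 (p / q) := by
  have hlog2 : 0 < log 2 := log_pos one_lt_two
  have hpq : p * log (p / q) = q * (p / q * log (p / q)) := by
    field_simp
  have hmul : -(q * exp (-1)) ≤ p * log (p / q) := by
    rw [hpq, ← mul_neg]
    exact mul_le_mul_of_nonneg_left (neg_exp_neg_one_le_mul_log (by positivity)) hq.le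
  rw [logb, ← mul_div_assoc, lt_div_iff₀ hlog2]
  nlinarith [exp_neg_one_lt_log_two]

lemma le_logb_two_div_of_rpow_mul_lt {L p q : ℝ} (hq : 0 < q) (h : 2 ^ L * q < p) :
    L ≤ logb 2 (p / q) := by
  have hp : 0 < p := lt_of_le_of_lt (by positivity) h
  rw [le_logb_iff_rpow_le one_lt_two (by positivity), le_div_iff₀ hq]
  exact h.le

theorem sum_filter_rpow_mul_lt_le {X : Type*} [Fintype X] {δ c : ℝ} (hδ : 0 < δ) {P Q : X → ℝ}
    (hP0 : ∀ x, 0 ≤ P x) (hQ0 : ∀ x, 0 < Q x) (hQ1 : ∑ x, Q x = 1)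
    (hc : ∑ x, P x * logb 2 (P x / Q x) ≤ c) :
    ∑ x ∈ univ.filter (fun x => 2 ^ ((c + 1) / δ) * Q x < P x), P x ≤ δ := by
  set L := (c + 1) / δ
  set B := univ.filter (fun x => 2 ^ L * Q x < P x)
  have hX : (univ : Finset X).Nonempty := nonempty_of_sum_ne_zero (by rw [hQ1]; exact one_ne_zero)
  have hc1 : 0 < c + 1 := by
    have := sum_lt_sum_of_nonempty hX fun x _ => neg_lt_mul_logb_two_div (hP0 x) (hQ0 x)
    rw [sum_neg_distrib, hQ1] at this
    linarith
  set G := univ.filter (fun x => ¬ 2 ^ L * Q x < P x)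
  have hgood : -1 ≤ ∑ x ∈ G, P x * logb 2 (P x / Q x) :=
    calc -1 ≤ -∑ x ∈ G, Q x := by
          rw [neg_le_neg_iff, ← hQ1]
          exact sum_le_sum_of_subset_of_nonneg (filter_subset _ _) fun x _ _ => (hQ0 x).le
      _ ≤ _ := by
          rw [← sum_neg_distrib]
          exact sum_le_sum fun x _ => (neg_lt_mul_logb_two_div (hP0 x) (hQ0 x)).le
  have hbad : L * ∑ x ∈ B, P x ≤ ∑ x ∈ B, P x * logb 2 (P x / Q x) := by
    rw [mul_sum]
    refine sum_le_sum fun x hx => ?_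
    have hx := (mem_filter.mp hx).2
    rw [mul_comm]
    exact mul_le_mul_of_nonneg_left (le_logb_two_div_of_rpow_mul_lt (hQ0 x) hx) (hP0 x)
  have hsplit := sum_filter_add_sum_filter_not univ (fun x => 2 ^ L * Q x < P x)
    fun x => P x * logb 2 (P x / Q x)
  have hLδ : L * δ = c + 1 := div_mul_cancel₀ _ hδ.ne'
  exact le_of_mul_le_mul_left (by linarith) (div_pos hc1 hδ)

/-- If `S(P‖Q) ≤ c` then there is a set `Good` of `P`-probability at
least `1 − δ` on which `P(x) ≤ 2^{(c+1)/δ}·Q(x)`. -/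
theorem stmt_3 {X : Type*} [Fintype X] (δ c : ℝ) (hδ : 0 < δ)
    (P Q : X → ℝ)
    (hP0 : ∀ x, 0 ≤ P x) (hP1 : ∑ x, P x = 1)
    (hQ0 : ∀ x, 0 < Q x) (hQ1 : ∑ x, Q x = 1)
    (hc : ∑ x, P x * Real.logb 2 (P x / Q x) ≤ c) :
    ∃ Good : Finset X, 1 - δ ≤ ∑ x ∈ Good, P x ∧
      ∀ x ∈ Good, P x ≤ (2 : ℝ) ^ ((c + 1) / δ) * Q x := by
  refine ⟨univ.filter (fun x => P x ≤ 2 ^ ((c + 1) / δ) * Q x), ?_, fun x hx => (mem_filter.mp hx).2⟩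
  have hbad := sum_filter_rpow_mul_lt_le hδ hP0 hQ0 hQ1 hc
  have hsplit := sum_filter_add_sum_filter_not univ (fun x => P x ≤ 2 ^ ((c + 1) / δ) * Q x) P
  simp only [not_le] at hsplit
  linarith
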